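/- Fix 0 < μ < v̄. Let prices satisfy 0 < v₁ < μ ≤ v₂ ≤ v̄ and let x₁ ∈ (0, 1], x₂ = 1 − x₁. Then the competitive ratio of the 2-level mechanism posting v₁ with probability x₁ and v₂ with probability x₂ over the mean ambiguity set, i.e., inf_{F ∈ 𝓕_mean} ( v₁x₁F([v₁, v̄]) + v₂x₂F([v₂, v̄]) ) / OPT(F), equals min{ (v₁x₁ + v₂x₂)/v̄, (μ − v₁)(v₁x₁ + v₂x₂)/(v₁(v̄ − v₁)), v₁x₁/v₂, x₁(μ − v₁)/(v₂ − v₁) }. -/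

import Mathlib

open MeasureTheory Set

noncomputable section

/-- Hindsight optimal revenue: `OPT(F) = sup_{p ∈ [0, v̄]} p · F([p, v̄])`. -/
def hindsightOpt (vbar : ℝ) (F : Measure ℝ) : ℝ :=
  ⨆ p : Icc (0 : ℝ) vbar, (p : ℝ) * (F (Icc (p : ℝ) vbar)).toReal

/-- The mean ambiguity set: probability measures on `[0, v̄]` with mean at least `μ`. -/
def Fmean (μ vbar : ℝ) : Set (Measure ℝ) :=
  {F | IsProbabilityMeasure F ∧ F (Icc (0 : ℝ) vbar) = 1 ∧ μ ≤ ∫ t, t ∂F}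

/-- Competitive ratio over the mean ambiguity set of the 2-level mechanism posting `v1` with
probability `x1` and `v2` with probability `1 - x1`. -/
def twoLevelCRmean (μ vbar v1 v2 x1 : ℝ) : ℝ :=
  ⨅ F : ↥(Fmean μ vbar),
    (v1 * x1 * (F.1 (Icc v1 vbar)).toReal + v2 * (1 - x1) * (F.1 (Icc v2 vbar)).toReal) /
      hindsightOpt vbar F.1

/-!
Lower bound. If `F` is supported on `[0, v̄]` and `G₁ = F[v₁, v̄]`, `G₂ = F[v₂, v̄]`, then pointwise
`t ≤ v₁ + (v₂ - v₁) 1[t ≥ v₁] + (v̄ - v₂) 1[t ≥ v₂]`, so the mean constraint gives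
`μ ≤ v₁ + (v₂ - v₁) G₁ + (v̄ - v₂) G₂`. Writing `m` for the claimed minimum, the revenue
`v₁x₁G₁ + v₂x₂G₂` dominates `m · p F[p, v̄]` for every price `p`: for `p ≤ v₁` compare with `m v₁`
(a linear program in `G₁, G₂` over the mean constraint), for `v₁ < p ≤ v₂` with `m v₂ G₁`, and for
`p > v₂` with `m v̄ G₂`.

Upper bound. Each of the four terms is approached by distributions with at most two atoms, placed
at `v̄` or just below a posted price, so that the mechanism misses that price while `OPT` is already
about the atom's value: `δ_v̄`; atoms below `v₁` and at `v̄`; one atom below `v₂` (with some mass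
moved to `v̄` when `μ = v₂`); atoms below `v₁` and below `v₂`.
-/

def twoLevelRevenue (vbar v1 v2 x1 : ℝ) (F : Measure ℝ) : ℝ :=
  v1 * x1 * F.real (Icc v1 vbar) + v2 * (1 - x1) * F.real (Icc v2 vbar)

theorem twoLevelCRmean_eq_iInf (μ vbar v1 v2 x1 : ℝ) :
    twoLevelCRmean μ vbar v1 v2 x1 =
      ⨅ F : Fmean μ vbar, twoLevelRevenue vbar v1 v2 x1 F / hindsightOpt vbar F :=
  rfl

theorem twoLevelRevenue_nonneg {vbar v1 v2 x1 : ℝ} (hv1 : 0 ≤ v1) (hv2 : 0 ≤ v2) (hx0 : 0 ≤ x1)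
    (hx1 : x1 ≤ 1) (F : Measure ℝ) : 0 ≤ twoLevelRevenue vbar v1 v2 x1 F := by
  unfold twoLevelRevenue
  have : 0 ≤ 1 - x1 := sub_nonneg.2 hx1
  positivity

section HindsightOpt

variable {vbar : ℝ} {F : Measure ℝ}

theorem hindsightOpt_nonneg : 0 ≤ hindsightOpt vbar F :=
  Real.iSup_nonneg fun p => mul_nonneg p.2.1 ENNReal.toReal_nonneg

theorem le_hindsightOpt [IsProbabilityMeasure F] {p : ℝ} (hp : p ∈ Icc 0 vbar) :
    p * F.real (Icc p vbar) ≤ hindsightOpt vbar F := by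
  refine le_ciSup (f := fun p : Icc (0 : ℝ) vbar => (p : ℝ) * F.real (Icc (p : ℝ) vbar))
    ⟨vbar, ?_⟩ ⟨p, hp⟩
  rintro _ ⟨⟨p, hp0, hpv⟩, rfl⟩
  calc p * F.real (Icc p vbar) ≤ p * 1 := by gcongr; exact measureReal_le_one
    _ ≤ vbar := by rwa [mul_one]

theorem hindsightOpt_le (hv : 0 ≤ vbar) {M : ℝ}
    (h : ∀ p ∈ Icc 0 vbar, p * F.real (Icc p vbar) ≤ M) : hindsightOpt vbar F ≤ M :=
  have : Nonempty (Icc (0 : ℝ) vbar) := ⟨⟨0, le_rfl, hv⟩⟩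
  ciSup_le fun p => h p p.2

end HindsightOpt

def twoPoint (a c q : ℝ) : Measure ℝ :=
  ENNReal.ofReal (1 - q) • Measure.dirac a + ENNReal.ofReal q • Measure.dirac c

section TwoPoint

variable {a c q : ℝ}

theorem twoPoint_apply {s : Set ℝ} (hs : MeasurableSet s) :
    twoPoint a c q s =
      ENNReal.ofReal (1 - q) * s.indicator 1 a + ENNReal.ofReal q * s.indicator 1 c := by
  simp [twoPoint, Measure.dirac_apply' _ hs]

theorem twoPoint_apply_of_mem (hq0 : 0 ≤ q) (hq1 : q ≤ 1) {s : Set ℝ} (hs : MeasurableSet s)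
    (ha : a ∈ s) (hc : c ∈ s) : twoPoint a c q s = 1 := by
  rw [twoPoint_apply hs, indicator_of_mem ha, indicator_of_mem hc, Pi.one_apply, Pi.one_apply,
    mul_one, mul_one, ← ENNReal.ofReal_add (sub_nonneg.2 hq1) hq0, sub_add_cancel,
    ENNReal.ofReal_one]

theorem isProbabilityMeasure_twoPoint (hq0 : 0 ≤ q) (hq1 : q ≤ 1) :
    IsProbabilityMeasure (twoPoint a c q) :=
  ⟨twoPoint_apply_of_mem hq0 hq1 MeasurableSet.univ (mem_univ a) (mem_univ c)⟩

theorem twoPoint_real_Icc (hq0 : 0 ≤ q) (hq1 : q ≤ 1) (v w : ℝ) :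
    (twoPoint a c q).real (Icc v w) =
      (if a ∈ Icc v w then 1 - q else 0) + (if c ∈ Icc v w then q else 0) := by
  rw [measureReal_def, twoPoint_apply measurableSet_Icc]
  by_cases ha : a ∈ Icc v w <;> by_cases hc : c ∈ Icc v w <;>
    simp [ha, hc, ENNReal.toReal_add, hq0, hq1]

theorem integral_id_twoPoint (hq0 : 0 ≤ q) (hq1 : q ≤ 1) :
    ∫ t, t ∂twoPoint a c q = (1 - q) * a + q * c := by
  rw [twoPoint, integral_add_measure, integral_smul_measure, integral_smul_measure, integral_dirac,
    integral_dirac, ENNReal.toReal_ofReal (sub_nonneg.2 hq1), ENNReal.toReal_ofReal hq0,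
    smul_eq_mul, smul_eq_mul]
  all_goals exact (integrable_dirac enorm_lt_top).smul_measure ENNReal.ofReal_ne_top

theorem twoPoint_mem_Fmean {μ vbar : ℝ} (hq0 : 0 ≤ q) (hq1 : q ≤ 1) (ha : 0 ≤ a) (hac : a ≤ c)
    (hc : c ≤ vbar) (hμ : μ ≤ (1 - q) * a + q * c) : twoPoint a c q ∈ Fmean μ vbar :=
  ⟨isProbabilityMeasure_twoPoint hq0 hq1,
    twoPoint_apply_of_mem hq0 hq1 measurableSet_Icc ⟨ha, hac.trans hc⟩ ⟨ha.trans hac, hc⟩,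
    (integral_id_twoPoint hq0 hq1).symm ▸ hμ⟩

theorem le_hindsightOpt_twoPoint {vbar : ℝ} (hq0 : 0 ≤ q) (hq1 : q ≤ 1) (ha : 0 ≤ a)
    (hac : a ≤ c) (hc : c ≤ vbar) : a ≤ hindsightOpt vbar (twoPoint a c q) := by
  have := isProbabilityMeasure_twoPoint (a := a) (c := c) hq0 hq1
  simpa [twoPoint_real_Icc hq0 hq1, hac, hc, hac.trans hc] using
    le_hindsightOpt (F := twoPoint a c q) ⟨ha, hac.trans hc⟩

end TwoPoint

theorem integral_id_le_of_measure_Icc_eq_one {F : Measure ℝ} [IsProbabilityMeasure F]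
    {vbar v1 v2 : ℝ} (hF : F (Icc 0 vbar) = 1) (h12 : v1 ≤ v2) :
    ∫ t, t ∂F ≤ v1 + (v2 - v1) * F.real (Icc v1 vbar) + (vbar - v2) * F.real (Icc v2 vbar) := by
  have hae : ∀ᵐ t ∂F, t ∈ Icc 0 vbar := by
    rw [ae_iff, ← compl_def, prob_compl_eq_zero_iff measurableSet_Icc, hF]
  set g : ℝ → ℝ := fun t => v1 + (Icc v1 vbar).indicator (fun _ => v2 - v1) t +
    (Icc v2 vbar).indicator (fun _ => vbar - v2) t
  have hi1 : Integrable ((Icc v1 vbar).indicator fun _ => v2 - v1) F :=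
    (integrable_const _).indicator measurableSet_Icc
  have hi2 : Integrable ((Icc v2 vbar).indicator fun _ => vbar - v2) F :=
    (integrable_const _).indicator measurableSet_Icc
  have hi01 : Integrable (fun t => v1 + (Icc v1 vbar).indicator (fun _ => v2 - v1) t) F :=
    (integrable_const _).add hi1
  have hid : Integrable (fun t : ℝ => t) F := by
    refine (integrable_const vbar).mono' aestronglyMeasurable_id ?_
    filter_upwards [hae] with t ht
    rw [Real.norm_eq_abs, abs_of_nonneg ht.1]
    exact ht.2
  have hle : ∀ᵐ t ∂F, t ≤ g t := by
    filter_upwards [hae] with t ht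
    simp only [g, indicator_apply, mem_Icc, ht.2, and_true]
    split_ifs <;> linarith [ht.2]
  calc ∫ t, t ∂F ≤ ∫ t, g t ∂F := integral_mono_ae hid (hi01.add hi2) hle
    _ = _ := by
      rw [integral_add hi01 hi2, integral_add (integrable_const _) hi1,
        integral_const, integral_indicator_const _ measurableSet_Icc,
        integral_indicator_const _ measurableSet_Icc]
      simp [smul_eq_mul, mul_comm]

theorem min_le_revenue_of_mean_le {μ vbar v1 v2 α β G1 G2 : ℝ} (hα : 0 ≤ α) (hβ : 0 ≤ β)
    (h12 : v1 < v2) (h2v : v2 ≤ vbar) (hG2 : 0 ≤ G2) (hG21 : G2 ≤ G1)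
    (hmean : μ ≤ v1 + (v2 - v1) * G1 + (vbar - v2) * G2) :
    min ((μ - v1) * (α + β) / (vbar - v1)) (α * (μ - v1) / (v2 - v1)) ≤ α * G1 + β * G2 := by
  have hmean' : α * (μ - v1) ≤ α * ((v2 - v1) * G1 + (vbar - v2) * G2) := by gcongr; linarith
  rcases le_or_gt (α * (vbar - v2)) (β * (v2 - v1)) with hcase | hcase
  · refine (min_le_right _ _).trans ?_
    rw [div_le_iff₀ (by linarith)]
    nlinarith [mul_nonneg (sub_nonneg.2 hcase) hG2]
  · refine (min_le_left _ _).trans ?_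
    rw [div_le_iff₀ (by linarith)]
    nlinarith [mul_le_mul_of_nonneg_left hmean (by positivity : 0 ≤ α + β),
      mul_nonneg (sub_nonneg.2 hcase.le) (sub_nonneg.2 hG21)]

theorem hindsightOpt_pos_of_mem_Fmean {μ vbar p : ℝ} {F : Measure ℝ} (hF : F ∈ Fmean μ vbar)
    (hp0 : 0 < p) (hpμ : p < μ) (hpv : p ≤ vbar) : 0 < hindsightOpt vbar F := by
  obtain ⟨hprob, hsupp, hmean⟩ := hF
  have hbound := hmean.trans (integral_id_le_of_measure_Icc_eq_one hsupp (le_refl p))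
  have hG : 0 < F.real (Icc p vbar) := by
    by_contra! h
    nlinarith [measureReal_nonneg (μ := F) (s := Icc p vbar)]
  exact (mul_pos hp0 hG).trans_le (le_hindsightOpt ⟨hp0.le, hpv⟩)

def crBound (μ vbar v1 v2 x1 : ℝ) : ℝ :=
  min (min ((v1 * x1 + v2 * (1 - x1)) / vbar)
          ((μ - v1) * (v1 * x1 + v2 * (1 - x1)) / (v1 * (vbar - v1))))
      (min (v1 * x1 / v2) (x1 * (μ - v1) / (v2 - v1)))

section LowerBound

variable {μ vbar v1 v2 x1 : ℝ}

theorem crBound_pos (hv1 : 0 < v1) (h1μ : v1 < μ) (hμ2 : μ ≤ v2) (h2v : v2 ≤ vbar)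
    (hx0 : 0 < x1) (hx1 : x1 ≤ 1) : 0 < crBound μ vbar v1 v2 x1 := by
  have hS : 0 < v1 * x1 + v2 * (1 - x1) := by nlinarith
  have : 0 < μ - v1 := sub_pos.2 h1μ
  have : 0 < vbar - v1 := by linarith
  have : 0 < v2 - v1 := by linarith
  have : 0 < v2 := by linarith
  have : 0 < vbar := by linarith
  exact lt_min (lt_min (by positivity) (by positivity)) (lt_min (by positivity) (by positivity))

theorem crBound_mul_le_of_mean_le (hv1 : 0 < v1) (h1μ : v1 < μ) (hμ2 : μ ≤ v2)
    (h2v : v2 ≤ vbar) (hx0 : 0 < x1) (hx1 : x1 ≤ 1) {G1 G2 : ℝ} (hG2 : 0 ≤ G2) (hG21 : G2 ≤ G1)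
    (hmean : μ ≤ v1 + (v2 - v1) * G1 + (vbar - v2) * G2) :
    crBound μ vbar v1 v2 x1 * v1 ≤ v1 * x1 * G1 + v2 * (1 - x1) * G2 := by
  have h12 : v1 < v2 := h1μ.trans_le hμ2
  set m := crBound μ vbar v1 v2 x1
  obtain ⟨⟨-, hmB⟩, -, hmD⟩ := (le_min_iff.1 (le_refl m)).imp le_min_iff.1 le_min_iff.1
  refine le_trans (le_min ?_ ?_) (min_le_revenue_of_mean_le (mul_pos hv1 hx0).le
    (mul_nonneg (hv1.le.trans h12.le) (sub_nonneg.2 hx1)) h12 h2v hG2 hG21 hmean)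
  · have h := (le_div_iff₀ (mul_pos hv1 (by linarith))).1 hmB
    rw [le_div_iff₀ (by linarith)]
    linarith
  · have h := (le_div_iff₀ (by linarith)).1 hmD
    rw [le_div_iff₀ (by linarith)]
    nlinarith

theorem crBound_mul_le_twoLevelRevenue (hv1 : 0 < v1) (h1μ : v1 < μ) (hμ2 : μ ≤ v2)
    (h2v : v2 ≤ vbar) (hx0 : 0 < x1) (hx1 : x1 ≤ 1) {F : Measure ℝ} (hF : F ∈ Fmean μ vbar)
    {p : ℝ} (hp : p ∈ Icc 0 vbar) :
    crBound μ vbar v1 v2 x1 * (p * F.real (Icc p vbar)) ≤ twoLevelRevenue vbar v1 v2 x1 F := by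
  obtain ⟨hprob, hsupp, hmean⟩ := hF
  have h12 : v1 < v2 := h1μ.trans_le hμ2
  set m := crBound μ vbar v1 v2 x1
  set G1 := F.real (Icc v1 vbar)
  set G2 := F.real (Icc v2 vbar)
  have hm : 0 < m := crBound_pos hv1 h1μ hμ2 h2v hx0 hx1
  obtain ⟨⟨hmA, -⟩, hmC, -⟩ := (le_min_iff.1 (le_refl m)).imp le_min_iff.1 le_min_iff.1
  have hG2 : 0 ≤ G2 := measureReal_nonneg
  have hG21 : G2 ≤ G1 := measureReal_mono (Icc_subset_Icc_left h12.le)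
  have hβ : 0 ≤ v2 * (1 - x1) := mul_nonneg (hv1.le.trans h12.le) (sub_nonneg.2 hx1)
  change m * _ ≤ v1 * x1 * G1 + v2 * (1 - x1) * G2
  rcases le_or_gt p v1 with hpv1 | hv1p
  · have hpF : p * F.real (Icc p vbar) ≤ v1 :=
      (mul_le_of_le_one_right hp.1 measureReal_le_one).trans hpv1
    exact (mul_le_mul_of_nonneg_left hpF hm.le).trans (crBound_mul_le_of_mean_le hv1 h1μ hμ2 h2v
      hx0 hx1 hG2 hG21 (hmean.trans (integral_id_le_of_measure_Icc_eq_one hsupp h12.le)))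
  rcases le_or_gt p v2 with hpv2 | hv2p
  · have hmC' : m * v2 ≤ v1 * x1 := (le_div_iff₀ (by linarith)).1 hmC
    have hpF : p * F.real (Icc p vbar) ≤ v2 * G1 :=
      mul_le_mul hpv2 (measureReal_mono (Icc_subset_Icc_left hv1p.le)) measureReal_nonneg
        (by linarith)
    calc m * (p * F.real (Icc p vbar)) ≤ m * v2 * G1 := by
          rw [mul_assoc]; exact mul_le_mul_of_nonneg_left hpF hm.le
      _ ≤ v1 * x1 * G1 := mul_le_mul_of_nonneg_right hmC' measureReal_nonneg
      _ ≤ _ := le_add_of_nonneg_right (mul_nonneg hβ hG2)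
  · have hmA' : m * vbar ≤ v1 * x1 + v2 * (1 - x1) := (le_div_iff₀ (by linarith)).1 hmA
    have hpF : p * F.real (Icc p vbar) ≤ vbar * G2 :=
      mul_le_mul hp.2 (measureReal_mono (Icc_subset_Icc_left hv2p.le)) measureReal_nonneg
        (by linarith)
    have hαβ : v1 * x1 * G2 ≤ v1 * x1 * G1 := mul_le_mul_of_nonneg_left hG21 (by positivity)
    calc m * (p * F.real (Icc p vbar)) ≤ m * vbar * G2 := by
          rw [mul_assoc]; exact mul_le_mul_of_nonneg_left hpF hm.le
      _ ≤ (v1 * x1 + v2 * (1 - x1)) * G2 := mul_le_mul_of_nonneg_right hmA' hG2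
      _ ≤ _ := by rw [add_mul]; linarith

theorem crBound_le_twoLevelCRmean (hv1 : 0 < v1) (h1μ : v1 < μ) (hμ2 : μ ≤ v2) (h2v : v2 ≤ vbar)
    (hμv : μ < vbar) (hx0 : 0 < x1) (hx1 : x1 ≤ 1) :
    crBound μ vbar v1 v2 x1 ≤ twoLevelCRmean μ vbar v1 v2 x1 := by
  have : Nonempty (Fmean μ vbar) :=
    ⟨⟨twoPoint vbar vbar 0, twoPoint_mem_Fmean le_rfl zero_le_one (by linarith) le_rfl le_rfl
      (by simpa using hμv.le)⟩⟩
  rw [twoLevelCRmean_eq_iInf]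
  refine le_ciInf fun ⟨F, hF⟩ => ?_
  have hm := crBound_pos hv1 h1μ hμ2 h2v hx0 hx1
  rw [le_div_iff₀ (hindsightOpt_pos_of_mem_Fmean hF hv1 h1μ (by linarith)), ← le_div_iff₀' hm]
  exact hindsightOpt_le (by linarith) fun p hp =>
    (le_div_iff₀' hm).2 (crBound_mul_le_twoLevelRevenue hv1 h1μ hμ2 h2v hx0 hx1 hF hp)

end LowerBound

theorem le_of_forall_mem_Ioo_le {f : ℝ → ℝ} {c ε : ℝ} (hε : 0 < ε) (hf : ContinuousAt f 0)
    (h : ∀ t ∈ Ioo 0 ε, c ≤ f t) : c ≤ f 0 :=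
  continuousWithinAt_const.closure_le (by simp [closure_Ioo hε.ne, hε.le]) hf.continuousWithinAt h

section UpperBound

variable {μ vbar v1 v2 x1 : ℝ}

theorem twoLevelCRmean_le_of_mem_Fmean (hv1 : 0 ≤ v1) (hv2 : 0 ≤ v2) (hx0 : 0 ≤ x1)
    (hx1 : x1 ≤ 1) {F : Measure ℝ} (hF : F ∈ Fmean μ vbar) :
    twoLevelCRmean μ vbar v1 v2 x1 ≤ twoLevelRevenue vbar v1 v2 x1 F / hindsightOpt vbar F := by
  rw [twoLevelCRmean_eq_iInf]
  refine ciInf_le ⟨0, ?_⟩ (⟨F, hF⟩ : Fmean μ vbar)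
  rintro _ ⟨G, rfl⟩
  exact div_nonneg (twoLevelRevenue_nonneg hv1 hv2 hx0 hx1 _) hindsightOpt_nonneg

theorem twoLevelCRmean_le_twoPoint (hv1 : 0 ≤ v1) (hv2 : 0 ≤ v2) (hx0 : 0 ≤ x1)
    (hx1 : x1 ≤ 1) {a c q : ℝ} (hq0 : 0 ≤ q) (hq1 : q ≤ 1) (ha : 0 < a) (hac : a ≤ c)
    (hc : c ≤ vbar) (hμ : μ ≤ (1 - q) * a + q * c) :
    twoLevelCRmean μ vbar v1 v2 x1 ≤ twoLevelRevenue vbar v1 v2 x1 (twoPoint a c q) / a :=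
  (twoLevelCRmean_le_of_mem_Fmean hv1 hv2 hx0 hx1
      (twoPoint_mem_Fmean hq0 hq1 ha.le hac hc hμ)).trans
    (div_le_div_of_nonneg_left (twoLevelRevenue_nonneg hv1 hv2 hx0 hx1 _) ha
      (le_hindsightOpt_twoPoint hq0 hq1 ha.le hac hc))

theorem twoLevelCRmean_le_bound_vbar (hv1 : 0 ≤ v1) (h12 : v1 ≤ v2) (h2v : v2 ≤ vbar)
    (hμv : μ ≤ vbar) (hv : 0 < vbar) (hx0 : 0 ≤ x1) (hx1 : x1 ≤ 1) :
    twoLevelCRmean μ vbar v1 v2 x1 ≤ (v1 * x1 + v2 * (1 - x1)) / vbar := by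
  have h := twoLevelCRmean_le_twoPoint (μ := μ) (a := vbar) (c := vbar) hv1 (hv1.trans h12) hx0
    hx1 le_rfl zero_le_one hv le_rfl le_rfl (by simpa using hμv)
  simpa [twoLevelRevenue, twoPoint_real_Icc le_rfl zero_le_one, h12.trans h2v, h2v] using h

theorem twoLevelCRmean_le_bound_v1_vbar (hv1 : 0 < v1) (h1μ : v1 < μ) (h12 : v1 ≤ v2)
    (h2v : v2 ≤ vbar) (hμv : μ < vbar) (hx0 : 0 ≤ x1) (hx1 : x1 ≤ 1) :
    twoLevelCRmean μ vbar v1 v2 x1 ≤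
      (μ - v1) * (v1 * x1 + v2 * (1 - x1)) / (v1 * (vbar - v1)) := by
  have key : ∀ t ∈ Ioo 0 v1, twoLevelCRmean μ vbar v1 v2 x1 ≤
      (μ - v1 + t) * (v1 * x1 + v2 * (1 - x1)) / ((v1 - t) * (vbar - v1 + t)) := by
    rintro t ⟨ht0, htv1⟩
    have hva : 0 < vbar - (v1 - t) := by linarith
    set q := (μ - (v1 - t)) / (vbar - (v1 - t))
    have hq : q * (vbar - (v1 - t)) = μ - (v1 - t) := div_mul_cancel₀ _ hva.ne'
    have hq0 : 0 ≤ q := div_nonneg (by linarith) hva.le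
    have hq1 : q ≤ 1 := (div_le_one hva).2 (by linarith)
    have h := twoLevelCRmean_le_twoPoint (μ := μ) (a := v1 - t) (c := vbar) hv1.le
      (hv1.le.trans h12) hx0 hx1 hq0 hq1 (sub_pos.2 htv1) (by linarith) le_rfl (by linarith)
    have h1 : ¬ v1 ≤ v1 - t := by linarith
    have h2 : ¬ v2 ≤ v1 - t := by linarith
    simp only [twoLevelRevenue, twoPoint_real_Icc hq0 hq1, mem_Icc, h1, h2, h12.trans h2v, h2v,
      le_refl, and_self, false_and, if_false, if_true, zero_add] at h
    refine h.trans_eq ?_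
    field_simp
    ring
  have hcont : ContinuousAt (fun t => (μ - v1 + t) * (v1 * x1 + v2 * (1 - x1)) /
      ((v1 - t) * (vbar - v1 + t))) 0 :=
    ContinuousAt.div (by fun_prop) (by fun_prop)
      (by simpa using (mul_pos hv1 (by linarith : 0 < vbar - v1)).ne')
  simpa using le_of_forall_mem_Ioo_le hv1 hcont key

theorem twoLevelCRmean_le_bound_v2_of_lt (hv1 : 0 < v1) (h1μ : v1 < μ) (hμ2 : μ < v2)
    (h2v : v2 ≤ vbar) (hx0 : 0 ≤ x1) (hx1 : x1 ≤ 1) :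
    twoLevelCRmean μ vbar v1 v2 x1 ≤ v1 * x1 / v2 := by
  have key : ∀ t ∈ Ioo 0 (v2 - μ), twoLevelCRmean μ vbar v1 v2 x1 ≤ v1 * x1 / (v2 - t) := by
    rintro t ⟨ht0, ht⟩
    have h := twoLevelCRmean_le_twoPoint (μ := μ) (a := v2 - t) (c := v2 - t) hv1.le
      (hv1.le.trans (h1μ.trans hμ2).le) hx0 hx1 le_rfl zero_le_one (by linarith) le_rfl
      (by linarith : v2 - t ≤ vbar) (by linarith)
    have h1 : v1 ≤ v2 - t := by linarith
    have h2 : ¬ v2 ≤ v2 - t := by linarith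
    simpa [twoLevelRevenue, twoPoint_real_Icc le_rfl zero_le_one, h1, h2,
      (by linarith : v2 - t ≤ vbar)] using h
  have hcont : ContinuousAt (fun t => v1 * x1 / (v2 - t)) 0 :=
    ContinuousAt.div (by fun_prop) (by fun_prop)
    (by simpa using (hv1.trans (h1μ.trans hμ2)).ne')
  simpa using le_of_forall_mem_Ioo_le (sub_pos.2 hμ2) hcont key

theorem twoLevelCRmean_le_bound_v2_of_eq (hv1 : 0 < v1) (h1μ : v1 < μ) (hμv : μ < vbar)
    (hx0 : 0 ≤ x1) (hx1 : x1 ≤ 1) :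
    twoLevelCRmean μ vbar v1 μ x1 ≤ v1 * x1 / μ := by
  have key : ∀ t ∈ Ioo 0 (μ - v1), twoLevelCRmean μ vbar v1 μ x1 ≤
      (v1 * x1 * (vbar - μ + t) + μ * (1 - x1) * t) / ((μ - t) * (vbar - μ + t)) := by
    rintro t ⟨ht0, ht⟩
    have hvt : 0 < vbar - μ + t := by linarith
    set q := t / (vbar - μ + t)
    have hq : q * (vbar - μ + t) = t := div_mul_cancel₀ _ hvt.ne'
    have hq0 : 0 ≤ q := div_nonneg ht0.le hvt.le
    have hq1 : q ≤ 1 := (div_le_one hvt).2 (by linarith)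
    have h := twoLevelCRmean_le_twoPoint (μ := μ) (a := μ - t) (c := vbar) hv1.le
      (hv1.le.trans h1μ.le) hx0 hx1 hq0 hq1 (by linarith) (by linarith) le_rfl (by linarith)
    have h1 : v1 ≤ μ - t := by linarith
    have h2 : ¬ μ ≤ μ - t := by linarith
    simp only [twoLevelRevenue, twoPoint_real_Icc hq0 hq1, mem_Icc, h1, h2, (h1μ.trans hμv).le,
      hμv.le, (by linarith : μ - t ≤ vbar), le_refl, and_self, false_and, if_false, if_true,
      zero_add, sub_add_cancel, mul_one] at h
    refine h.trans_eq ?_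
    simp only [q]
    field_simp
  have hcont : ContinuousAt (fun t => (v1 * x1 * (vbar - μ + t) + μ * (1 - x1) * t) /
      ((μ - t) * (vbar - μ + t))) 0 :=
    ContinuousAt.div (by fun_prop) (by fun_prop)
      (by simpa using (mul_pos (hv1.trans h1μ) (sub_pos.2 hμv)).ne')
  refine (le_of_forall_mem_Ioo_le (sub_pos.2 h1μ) hcont key).trans_eq ?_
  have : vbar - μ ≠ 0 := (sub_pos.2 hμv).ne'
  simp only [add_zero, sub_zero, mul_zero]
  field_simp

theorem twoLevelCRmean_le_bound_v2 (hv1 : 0 < v1) (h1μ : v1 < μ) (hμ2 : μ ≤ v2)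
    (h2v : v2 ≤ vbar) (hμv : μ < vbar) (hx0 : 0 ≤ x1) (hx1 : x1 ≤ 1) :
    twoLevelCRmean μ vbar v1 v2 x1 ≤ v1 * x1 / v2 := by
  rcases hμ2.lt_or_eq with hμ2 | rfl
  · exact twoLevelCRmean_le_bound_v2_of_lt hv1 h1μ hμ2 h2v hx0 hx1
  · exact twoLevelCRmean_le_bound_v2_of_eq hv1 h1μ hμv hx0 hx1

theorem twoLevelCRmean_le_bound_v1_v2_of_lt (hv1 : 0 < v1) (h1μ : v1 < μ) (hμ2 : μ < v2)
    (h2v : v2 ≤ vbar) (hx0 : 0 ≤ x1) (hx1 : x1 ≤ 1) :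
    twoLevelCRmean μ vbar v1 v2 x1 ≤ x1 * (μ - v1) / (v2 - v1) := by
  have key : ∀ t ∈ Ioo 0 (min v1 (v2 - μ)), twoLevelCRmean μ vbar v1 v2 x1 ≤
      x1 * (μ - v1 + t) * v1 / ((v2 - v1) * (v1 - t)) := by
    rintro t ⟨ht0, ht⟩
    obtain ⟨htv1, htv2⟩ := lt_min_iff.1 ht
    have h21 : 0 < v2 - v1 := by linarith
    set q := (μ - v1 + t) / (v2 - v1)
    have hq : q * (v2 - v1) = μ - v1 + t := div_mul_cancel₀ _ h21.ne'
    have hq0 : 0 ≤ q := div_nonneg (by linarith) h21.le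
    have hq1 : q ≤ 1 := (div_le_one h21).2 (by linarith)
    have h := twoLevelCRmean_le_twoPoint (μ := μ) (a := v1 - t) (c := v2 - t) hv1.le
      (hv1.le.trans (h1μ.trans hμ2).le) hx0 hx1 hq0 hq1 (by linarith) (by linarith)
      (by linarith : v2 - t ≤ vbar) (by linarith)
    have h1 : ¬ v1 ≤ v1 - t := by linarith
    have h2 : v1 ≤ v2 - t := by linarith
    have h3 : ¬ v2 ≤ v1 - t := by linarith
    have h4 : ¬ v2 ≤ v2 - t := by linarith
    simp only [twoLevelRevenue, twoPoint_real_Icc hq0 hq1, mem_Icc, h1, h2, h3, h4,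
      (by linarith : v2 - t ≤ vbar), and_self, false_and, if_false, if_true, zero_add,
      add_zero, mul_zero] at h
    refine h.trans_eq ?_
    simp only [q]
    field_simp
  have hcont : ContinuousAt (fun t => x1 * (μ - v1 + t) * v1 / ((v2 - v1) * (v1 - t))) 0 :=
    ContinuousAt.div (by fun_prop) (by fun_prop)
      (by simpa using (mul_pos (by linarith : 0 < v2 - v1) hv1).ne')
  refine (le_of_forall_mem_Ioo_le (lt_min hv1 (sub_pos.2 hμ2)) hcont key).trans_eq ?_
  simp only [add_zero, sub_zero]
  field_simp

theorem twoLevelCRmean_le_bound_v1_v2 (hv1 : 0 < v1) (h1μ : v1 < μ) (hμ2 : μ ≤ v2)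
    (h2v : v2 ≤ vbar) (hμv : μ < vbar) (hx0 : 0 ≤ x1) (hx1 : x1 ≤ 1) :
    twoLevelCRmean μ vbar v1 v2 x1 ≤ x1 * (μ - v1) / (v2 - v1) := by
  rcases hμ2.lt_or_eq with hμ2 | rfl
  · exact twoLevelCRmean_le_bound_v1_v2_of_lt hv1 h1μ hμ2 h2v hx0 hx1
  · refine (twoLevelCRmean_le_bound_v2_of_eq hv1 h1μ hμv hx0 hx1).trans ?_
    rw [mul_div_cancel_right₀ _ (sub_pos.2 h1μ).ne', div_le_iff₀ (by linarith)]
    nlinarith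


theorem twoLevelCRmean_le_crBound (hv1 : 0 < v1) (h1μ : v1 < μ) (hμ2 : μ ≤ v2) (h2v : v2 ≤ vbar)
    (hμv : μ < vbar) (hx0 : 0 ≤ x1) (hx1 : x1 ≤ 1) :
    twoLevelCRmean μ vbar v1 v2 x1 ≤ crBound μ vbar v1 v2 x1 :=
  have h12 : v1 ≤ v2 := (h1μ.trans_le hμ2).le
  have hv : 0 < vbar := hv1.trans (h1μ.trans hμv)
  le_min
    (le_min (twoLevelCRmean_le_bound_vbar hv1.le h12 h2v hμv.le hv hx0 hx1)
      (twoLevelCRmean_le_bound_v1_vbar hv1 h1μ h12 h2v hμv hx0 hx1))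
    (le_min (twoLevelCRmean_le_bound_v2 hv1 h1μ hμ2 h2v hμv hx0 hx1)
      (twoLevelCRmean_le_bound_v1_v2 hv1 h1μ hμ2 h2v hμv hx0 hx1))

end UpperBound

theorem stmt7_general (μ vbar : ℝ) (hμv : μ < vbar)
    (v1 v2 x1 : ℝ) (hv1 : 0 < v1) (h1μ : v1 < μ) (hμ2 : μ ≤ v2) (h2v : v2 ≤ vbar)
    (hx0 : 0 < x1) (hx1 : x1 ≤ 1) :
    twoLevelCRmean μ vbar v1 v2 x1 =
      min (min ((v1 * x1 + v2 * (1 - x1)) / vbar)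
              ((μ - v1) * (v1 * x1 + v2 * (1 - x1)) / (v1 * (vbar - v1))))
          (min (v1 * x1 / v2) (x1 * (μ - v1) / (v2 - v1))) :=
  le_antisymm (twoLevelCRmean_le_crBound hv1 h1μ hμ2 h2v hμv hx0.le hx1)
    (crBound_le_twoLevelCRmean hv1 h1μ hμ2 h2v hμv hx0 hx1)

/-- For `0 < v₁ < μ ≤ v₂ ≤ v̄` and `x₁ ∈ (0,1]`, the competitive ratio of the 2-level mechanism
over the mean ambiguity set equals the minimum of the four displayed quantities. -/
theorem stmt7 (μ vbar : ℝ) (hμ : 0 < μ) (hμv : μ < vbar)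
    (v1 v2 x1 : ℝ) (hv1 : 0 < v1) (h1μ : v1 < μ) (hμ2 : μ ≤ v2) (h2v : v2 ≤ vbar)
    (hx0 : 0 < x1) (hx1 : x1 ≤ 1) :
    twoLevelCRmean μ vbar v1 v2 x1 =
      min (min ((v1 * x1 + v2 * (1 - x1)) / vbar)
              ((μ - v1) * (v1 * x1 + v2 * (1 - x1)) / (v1 * (vbar - v1))))
          (min (v1 * x1 / v2) (x1 * (μ - v1) / (v2 - v1))) :=
  stmt7_general μ vbar hμv v1 v2 x1 hv1 h1μ hμ2 h2v hx0 hx1
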